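/- Let d, N be integers with N > d ≥ 2 and let j be an integer with 0 ≤ j ≤ d-2. Define S_j := Σ_{i=0}^{d-j-2} binom(N-j-1, i) (and S_j := 0 if j ≥ d-1). Then S_{j+1} / binom(N-j-2, d-j-2) < S_j / binom(N-j-1, d-j-1). -/

import Mathlib

/-!
Put `n = N - j - 2`, `k = d - j - 2` and `A = Σ_{i<k} C(n, i)`, `B = C(n, k)`. Pascal's rule gives
`S_j = Σ_{i≤k} C(n+1, i) = 2A + B` and `C(n+1, k+1) = B + C(n, k+1)`, so after clearing denominators
the claim becomes `A · C(n, k+1) < B · (A + B)`. Log-concavity of `i ↦ C(n, i)` gives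
`C(n, i) C(n, k+1) ≤ C(n, i+1) C(n, k)` for `i ≤ k`; summing over `i < k` bounds the left side by
`B · Σ_{i<k} C(n, i+1) = B · (A + B - 1)`.
-/

open Filter Finset Real

/-- `S d N j = Σ_{i=0}^{d-j-2} C(N-j-1, i)` (a partial binomial sum); by natural
subtraction this is the empty sum `0` when `j ≥ d-1`. -/
noncomputable def S (d N j : ℕ) : ℝ :=
  ∑ i ∈ Finset.range (d - j - 1), ((N - j - 1).choose i : ℝ)

namespace Nat

theorem choose_mul_choose_succ_le_choose_succ_mul_choose (n : ℕ) {i k : ℕ} (hik : i ≤ k) :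
    n.choose i * n.choose (k + 1) ≤ n.choose (i + 1) * n.choose k := by
  refine Nat.le_of_mul_le_mul_right (c := (i + 1) * (k + 1)) ?_ (by positivity)
  calc n.choose i * n.choose (k + 1) * ((i + 1) * (k + 1))
      = n.choose i * (n.choose (k + 1) * (k + 1)) * (i + 1) := by ring
    _ = n.choose i * n.choose k * (n - k) * (i + 1) := by rw [choose_succ_right_eq]; ring
    _ ≤ n.choose i * n.choose k * (n - i) * (k + 1) := by gcongr
    _ = n.choose i * (n - i) * n.choose k * (k + 1) := by ring
    _ = n.choose (i + 1) * n.choose k * ((i + 1) * (k + 1)) := by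
        rw [← choose_succ_right_eq]; ring

theorem sum_range_choose_succ_add_one (n k : ℕ) :
    ∑ i ∈ range k, n.choose (i + 1) + 1 = ∑ i ∈ range k, n.choose i + n.choose k := by
  rw [← sum_range_succ, sum_range_succ', choose_zero_right]

theorem sum_range_succ_choose_succ (n k : ℕ) :
    ∑ i ∈ range (k + 1), (n + 1).choose i = 2 * ∑ i ∈ range k, n.choose i + n.choose k := by
  have hpascal : ∑ i ∈ range k, (n + 1).choose (i + 1) =
      ∑ i ∈ range k, n.choose i + ∑ i ∈ range k, n.choose (i + 1) := by
    rw [← sum_add_distrib]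
    exact sum_congr rfl fun i _ => choose_succ_succ n i
  rw [sum_range_succ', hpascal, choose_zero_right]
  linarith [sum_range_choose_succ_add_one n k]

theorem sum_range_choose_mul_choose_succ_lt {n k : ℕ} (hk : k ≤ n) :
    (∑ i ∈ range k, n.choose i) * n.choose (k + 1) <
      n.choose k * (∑ i ∈ range k, n.choose i + n.choose k) := by
  have hlogconcave : (∑ i ∈ range k, n.choose i) * n.choose (k + 1) ≤
      n.choose k * ∑ i ∈ range k, n.choose (i + 1) := by
    rw [sum_mul, mul_sum]
    refine sum_le_sum fun i hi => ?_
    rw [mul_comm (n.choose k)]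
    exact choose_mul_choose_succ_le_choose_succ_mul_choose n (mem_range.mp hi).le
  have hpos : 0 < n.choose k := choose_pos hk
  have hshift := sum_range_choose_succ_add_one n k
  calc _ ≤ n.choose k * ∑ i ∈ range k, n.choose (i + 1) := hlogconcave
    _ < n.choose k * (∑ i ∈ range k, n.choose i + n.choose k) := by gcongr; omega

theorem sum_range_choose_mul_choose_succ_succ_lt {n k : ℕ} (hk : k ≤ n) :
    (∑ i ∈ range k, n.choose i) * (n + 1).choose (k + 1) <
      (∑ i ∈ range (k + 1), (n + 1).choose i) * n.choose k := by
  rw [sum_range_succ_choose_succ, choose_succ_succ]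
  nlinarith [sum_range_choose_mul_choose_succ_lt hk]

end Nat

theorem S_ratio_strict_mono (d N j : ℕ) (hd : 2 ≤ d) (hdN : d < N) (hj : j ≤ d - 2) :
    S d N (j + 1) / ((N - j - 2).choose (d - j - 2) : ℝ) <
      S d N j / ((N - j - 1).choose (d - j - 1) : ℝ) := by
  obtain ⟨n, k, hn, hk, hkn⟩ : ∃ n k, N - j - 2 = n ∧ d - j - 2 = k ∧ k ≤ n :=
    ⟨_, _, rfl, rfl, by omega⟩
  unfold S
  rw [show d - (j + 1) - 1 = k by omega, show N - (j + 1) - 1 = n by omega,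
    show d - j - 1 = k + 1 by omega, show N - j - 1 = n + 1 by omega, hn, hk,
    div_lt_div_iff₀ (by exact_mod_cast Nat.choose_pos hkn)
      (by exact_mod_cast Nat.choose_pos (by omega))]
  exact_mod_cast Nat.sum_range_choose_mul_choose_succ_succ_lt hkn
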